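/- arXiv:2005.01829 — 2 statements merged into one kernel-verified Lean document; each statement's English description precedes it below -/
import Mathlib

section
/- If G is a bipartite graph, then V(G) has a partition S ∪ T such that: (a) G has a matching M ⊆ E_G(S,T) saturating every vertex of S, and (b) T is an independent set in G. -/
set_option maxHeartbeats 1000000

open Classical in
noncomputable def nbhdF {V : Type*} [DecidableEq V] (G : SimpleGraph V) (B W : Finset V) :
    Finset V := B.filter (fun b => ∃ a ∈ W, G.Adj a b)

lemma mem_nbhdF {V : Type*} [DecidableEq V] (G : SimpleGraph V) (B W : Finset V) (b : V) :
    b ∈ nbhdF G B W ↔ b ∈ B ∧ ∃ a ∈ W, G.Adj a b := by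
  simp [nbhdF]

/-- Hall's theorem, restricted to a finset `A` with neighbourhoods in `B`. -/
lemma hall_on {V : Type*} [DecidableEq V] (G : SimpleGraph V) (A B : Finset V)
    (h : ∀ W ⊆ A, W.card ≤ (nbhdF G B W).card) :
    ∃ f : V → V, Set.InjOn f ↑A ∧ ∀ a ∈ A, f a ∈ B ∧ G.Adj a (f a) := by
  classical
  set t : ↥A → Finset V := fun a => B.filter (fun b => G.Adj a b) with ht
  have hall : ∀ s : Finset ↥A, s.card ≤ (s.biUnion t).card := by
    intro s
    have h1 : (s.image (Subtype.val)).card = s.card :=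
      Finset.card_image_of_injective _ Subtype.val_injective
    have h2 : s.biUnion t = nbhdF G B (s.image Subtype.val) := by
      ext b
      simp [mem_nbhdF, ht, Finset.mem_biUnion, and_comm]
      tauto
    rw [h2, ← h1]
    exact h _ (by intro x hx; simp at hx; obtain ⟨hx', _⟩ := hx; exact hx')
  obtain ⟨f, hfinj, hft⟩ := (Finset.all_card_le_biUnion_card_iff_exists_injective t).mp hall
  refine ⟨fun v => if h : v ∈ A then f ⟨v, h⟩ else v, ?_, ?_⟩
  · intro x hx y hy hxy
    simp only [Finset.mem_coe] at hx hy
    simp only [dif_pos hx, dif_pos hy] at hxy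
    exact Subtype.ext_iff.mp (hfinj hxy)
  · intro a ha
    simp only [dif_pos ha]
    have := hft ⟨a, ha⟩
    simp [ht, Finset.mem_filter] at this
    exact this

lemma key {V : Type*} [Fintype V] [DecidableEq V] (G : SimpleGraph V) :
    ∀ (n : ℕ) (A B : Finset V), A.card ≤ n → Disjoint A B →
    (∀ x ∈ A, ∀ y ∈ A, ¬ G.Adj x y) → (∀ x ∈ B, ∀ y ∈ B, ¬ G.Adj x y) →
    ∃ S T : Set V, S ∪ T = ↑A ∪ ↑B ∧ Disjoint S T ∧
      (∃ f : V → V, Set.InjOn f S ∧ ∀ s ∈ S, f s ∈ T ∧ G.Adj s (f s)) ∧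
      (∀ x ∈ T, ∀ y ∈ T, ¬ G.Adj x y) := by
  classical
  intro n
  induction n with
  | zero =>
    intro A B hcard _ _ hB
    have hA : A = ∅ := Finset.card_eq_zero.mp (Nat.le_zero.mp hcard)
    subst hA
    exact ⟨∅, ↑B, by simp, by simp, ⟨id, by simp [Set.InjOn], by simp⟩,
      fun x hx y hy => hB x hx y hy⟩
  | succ m ih =>
    intro A B hcard hdisj hA hB
    by_cases hall : ∀ W ⊆ A, W.card ≤ (nbhdF G B W).card
    · -- Hall's condition holds: match all of A into B.
      obtain ⟨f, hfinj, hf⟩ := hall_on G A B hall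
      exact ⟨↑A, ↑B, rfl, by exact_mod_cast hdisj, ⟨f, hfinj, hf⟩,
        fun x hx y hy => hB x hx y hy⟩
    · push_neg at hall
      -- Choose a violator W of minimum cardinality.
      have hne : (A.powerset.filter (fun W => (nbhdF G B W).card < W.card)).Nonempty := by
        obtain ⟨W, hWA, hWc⟩ := hall
        exact ⟨W, by simp [Finset.mem_filter, Finset.mem_powerset, hWA, hWc]⟩
      obtain ⟨W, hWmem, hWmin⟩ := Finset.exists_min_image _ Finset.card hne
      rw [Finset.mem_filter, Finset.mem_powerset] at hWmem
      obtain ⟨hWA, hWc⟩ := hWmem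
      have hWne : W.Nonempty := by
        rw [Finset.nonempty_iff_ne_empty]
        rintro rfl; simp at hWc
      obtain ⟨w, hw⟩ := hWne
      -- Hall's condition holds for W.erase w, by minimality.
      have hall' : ∀ U ⊆ W.erase w, U.card ≤ (nbhdF G B U).card := by
        intro U hU
        by_contra hc
        push_neg at hc
        have hUW : U ⊆ W := hU.trans (Finset.erase_subset _ _)
        have := hWmin U (by
          rw [Finset.mem_filter, Finset.mem_powerset]
          exact ⟨hUW.trans hWA, hc⟩)
        have hUcard : U.card ≤ (W.erase w).card := Finset.card_le_card hU
        rw [Finset.card_erase_of_mem hw] at hUcard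
        omega
      obtain ⟨f, hfinj, hf⟩ := hall_on G (W.erase w) B hall'
      -- The image of f on W.erase w is exactly nbhdF G B W.
      set N := nbhdF G B W with hN
      have hNB : N ⊆ B := Finset.filter_subset _ _
      have himg_sub : (W.erase w).image f ⊆ N := by
        intro b hb
        rw [Finset.mem_image] at hb
        obtain ⟨a, ha, rfl⟩ := hb
        obtain ⟨hfB, hfadj⟩ := hf a ha
        exact (mem_nbhdF G B W _).mpr ⟨hfB, a, Finset.mem_of_mem_erase ha, hfadj⟩
      have himg_card : ((W.erase w).image f).card = (W.erase w).card :=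
        Finset.card_image_of_injOn (by intro x hx y hy hxy; exact hfinj (by exact_mod_cast hx) (by exact_mod_cast hy) hxy)
      have hNcard : N.card ≤ ((W.erase w).image f).card := by
        rw [himg_card, Finset.card_erase_of_mem hw]; omega
      have himg : (W.erase w).image f = N := Finset.eq_of_subset_of_card_le himg_sub hNcard
      -- g : the inverse matching from N to W.erase w
      have hg : ∀ b ∈ N, ∃ a ∈ W.erase w, f a = b := by
        intro b hb
        rw [← himg, Finset.mem_image] at hb
        obtain ⟨a, ha, rfl⟩ := hb
        exact ⟨a, ha, rfl⟩
      set g : V → V := fun b => if h : b ∈ N then (hg b h).choose else b with hgdef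
      have hgspec : ∀ b ∈ N, g b ∈ W.erase w ∧ f (g b) = b := by
        intro b hb
        simp only [hgdef, dif_pos hb]
        exact ⟨(hg b hb).choose_spec.1, (hg b hb).choose_spec.2⟩
      -- recursion
      have hA'card : (A \ W).card ≤ m := by
        have h1 : (A \ W).card = A.card - W.card := Finset.card_sdiff_of_subset hWA
        have h2 : 1 ≤ W.card := Finset.card_pos.mpr ⟨w, hw⟩
        omega
      obtain ⟨S', T', hST'union, hST'disj, ⟨f', hf'inj, hf'⟩, hT'indep⟩ :=
        ih (A \ W) (B \ N) hA'card (hdisj.mono (Finset.sdiff_subset) (Finset.sdiff_subset))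
          (fun x hx y hy => hA x (Finset.mem_sdiff.mp hx).1 y (Finset.mem_sdiff.mp hy).1)
          (fun x hx y hy => hB x (Finset.mem_sdiff.mp hx).1 y (Finset.mem_sdiff.mp hy).1)
      have hS'sub : S' ⊆ ↑(A \ W) ∪ ↑(B \ N) := hST'union ▸ Set.subset_union_left
      have hT'sub : T' ⊆ ↑(A \ W) ∪ ↑(B \ N) := hST'union ▸ Set.subset_union_right
      -- disjointness facts
      have hWB : Disjoint (↑W : Set V) ↑B := by
        exact_mod_cast hdisj.mono_left hWA
      have hNA : Disjoint (↑N : Set V) ↑A := by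
        have : Disjoint B A := hdisj.symm
        exact_mod_cast this.mono_left hNB
      have hN_T' : Disjoint (↑N : Set V) T' := by
        refine Set.disjoint_left.mpr fun b hbN hbT' => ?_
        rcases hT'sub hbT' with h | h
        · exact Set.disjoint_left.mp hNA hbN (by simpa using (Finset.mem_sdiff.mp (by exact_mod_cast h)).1)
        · exact (Finset.mem_sdiff.mp (by exact_mod_cast h)).2 hbN
      have hN_S' : Disjoint (↑N : Set V) S' := by
        refine Set.disjoint_left.mpr fun b hbN hbS' => ?_
        rcases hS'sub hbS' with h | h
        · exact Set.disjoint_left.mp hNA hbN (by simpa using (Finset.mem_sdiff.mp (by exact_mod_cast h)).1)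
        · exact (Finset.mem_sdiff.mp (by exact_mod_cast h)).2 hbN
      have hW_S' : Disjoint (↑W : Set V) S' := by
        refine Set.disjoint_left.mpr fun a haW haS' => ?_
        rcases hS'sub haS' with h | h
        · exact (Finset.mem_sdiff.mp (by exact_mod_cast h)).2 haW
        · exact Set.disjoint_left.mp hWB haW
            (by simpa using (Finset.mem_sdiff.mp (by exact_mod_cast h)).1)
      have hW_T' : Disjoint (↑W : Set V) T' := by
        refine Set.disjoint_left.mpr fun a haW haT' => ?_
        rcases hT'sub haT' with h | h
        · exact (Finset.mem_sdiff.mp (by exact_mod_cast h)).2 haW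
        · exact Set.disjoint_left.mp hWB haW
            (by simpa using (Finset.mem_sdiff.mp (by exact_mod_cast h)).1)
      refine ⟨↑N ∪ S', ↑W ∪ T', ?_, ?_, ?_, ?_⟩
      · -- union
        ext v
        have hm : v ∈ S' ∨ v ∈ T' ↔ (v ∈ A ∧ v ∉ W) ∨ (v ∈ B ∧ v ∉ N) := by
          have := Set.ext_iff.mp hST'union v
          simpa [Finset.mem_sdiff] using this
        have hWA' : v ∈ W → v ∈ A := fun h => hWA h
        have hNB' : v ∈ N → v ∈ B := fun h => hNB h
        have hWem : v ∈ W ∨ v ∉ W := em _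
        have hNem : v ∈ N ∨ v ∉ N := em _
        simp only [Set.mem_union, Finset.mem_coe]
        tauto
      · -- disjoint
        rw [Set.disjoint_union_left]
        constructor
        · rw [Set.disjoint_union_right]
          exact ⟨(hWB.symm.mono_left (by exact_mod_cast hNB)), hN_T'⟩
        · rw [Set.disjoint_union_right]
          exact ⟨hW_S'.symm, hST'disj⟩
      · -- matching
        refine ⟨fun v => if v ∈ N then g v else f' v, ?_, ?_⟩
        · intro x hx y hy hxy
          rcases hx with hx | hx <;> rcases hy with hy | hy
          · have hxN : x ∈ N := by exact_mod_cast hx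
            have hyN : y ∈ N := by exact_mod_cast hy
            simp only [if_pos hxN, if_pos hyN] at hxy
            rw [← (hgspec x hxN).2, ← (hgspec y hyN).2, hxy]
          · have hxN : x ∈ N := by exact_mod_cast hx
            have hyN : y ∉ N := fun h => Set.disjoint_left.mp hN_S' (by exact_mod_cast h) hy
            simp only [if_pos hxN, if_neg hyN] at hxy
            exfalso
            have h1 : g x ∈ (↑W : Set V) := by
              exact_mod_cast Finset.mem_of_mem_erase (hgspec x hxN).1
            have h2 : f' y ∈ T' := (hf' y hy).1
            exact Set.disjoint_left.mp hW_T' (hxy ▸ h1) h2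
          · have hyN : y ∈ N := by exact_mod_cast hy
            have hxN : x ∉ N := fun h => Set.disjoint_left.mp hN_S' (by exact_mod_cast h) hx
            simp only [if_neg hxN, if_pos hyN] at hxy
            exfalso
            have h1 : g y ∈ (↑W : Set V) := by
              exact_mod_cast Finset.mem_of_mem_erase (hgspec y hyN).1
            have h2 : f' x ∈ T' := (hf' x hx).1
            exact Set.disjoint_left.mp hW_T' (hxy ▸ h1) h2
          · have hxN : x ∉ N := fun h => Set.disjoint_left.mp hN_S' (by exact_mod_cast h) hx
            have hyN : y ∉ N := fun h => Set.disjoint_left.mp hN_S' (by exact_mod_cast h) hy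
            simp only [if_neg hxN, if_neg hyN] at hxy
            exact hf'inj hx hy hxy
        · intro s hs
          rcases hs with hs | hs
          · have hsN : s ∈ N := by exact_mod_cast hs
            simp only [if_pos hsN]
            obtain ⟨hmem, heq⟩ := hgspec s hsN
            have hadj := (hf (g s) hmem).2
            rw [heq] at hadj
            exact ⟨Or.inl (by exact_mod_cast Finset.mem_of_mem_erase hmem), hadj.symm⟩
          · have hsN : s ∉ N := fun h => Set.disjoint_left.mp hN_S' (by exact_mod_cast h) hs
            simp only [if_neg hsN]
            exact ⟨Or.inr (hf' s hs).1, (hf' s hs).2⟩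
      · -- independence of W ∪ T'
        intro x hx y hy hadj
        rcases hx with hx | hx <;> rcases hy with hy | hy
        · exact hA x (hWA (by exact_mod_cast hx)) y (hWA (by exact_mod_cast hy)) hadj
        · -- x ∈ W, y ∈ T'
          rcases hT'sub hy with h | h
          · exact hA x (hWA (by exact_mod_cast hx)) y (Finset.mem_sdiff.mp (by exact_mod_cast h)).1 hadj
          · have hyB := Finset.mem_sdiff.mp (by exact_mod_cast h : y ∈ B \ N)
            exact hyB.2 ((mem_nbhdF G B W y).mpr ⟨hyB.1, x, by exact_mod_cast hx, hadj⟩)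
        · rcases hT'sub hx with h | h
          · exact hA y (hWA (by exact_mod_cast hy)) x (Finset.mem_sdiff.mp (by exact_mod_cast h)).1 hadj.symm
          · have hxB := Finset.mem_sdiff.mp (by exact_mod_cast h : x ∈ B \ N)
            exact hxB.2 ((mem_nbhdF G B W x).mpr ⟨hxB.1, y, by exact_mod_cast hy, hadj.symm⟩)
        · exact hT'indep x hx y hy hadj

/-- Every (finite simple) bipartite graph `G` has a vertex partition `S ∪ T` such that
(a) `G` has a matching `M ⊆ E_G(S,T)` saturating every vertex of `S` (encoded by an
injective-on-`S` map `f` sending each `s ∈ S` to a neighbour in `T`), and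
(b) `T` is an independent set in `G`. -/
theorem bipartite_partition_matching {V : Type*} [Fintype V] [DecidableEq V]
    (G : SimpleGraph V) (hbip : G.Colorable 2) :
    ∃ S T : Set V, S ∪ T = Set.univ ∧ Disjoint S T ∧
      (∃ f : V → V, Set.InjOn f S ∧ ∀ s ∈ S, f s ∈ T ∧ G.Adj s (f s)) ∧
      (∀ x ∈ T, ∀ y ∈ T, ¬ G.Adj x y) := by
  classical
  obtain ⟨C⟩ := hbip
  set A : Finset V := Finset.univ.filter (fun v => C v = 0) with hA
  set B : Finset V := Finset.univ.filter (fun v => C v = 1) with hB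
  have htwo : ∀ a : Fin 2, a = 0 ∨ a = 1 := by decide
  obtain ⟨S, T, hunion, hdisj, hmatch, hindep⟩ := key G A.card A B le_rfl
    (Finset.disjoint_left.mpr (by
      intro v hv hv'
      simp [hA] at hv
      simp [hB] at hv'
      rw [hv] at hv'
      exact absurd hv' (by decide)))
    (fun x hx y hy hadj => by
      have := C.valid hadj
      simp [hA] at hx hy
      simp [hx, hy] at this)
    (fun x hx y hy hadj => by
      have := C.valid hadj
      simp [hB] at hx hy
      simp [hx, hy] at this)
  refine ⟨S, T, ?_, hdisj, hmatch, hindep⟩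
  rw [hunion]
  ext v
  have h2 := htwo (C v)
  have h01 : (0 : Fin 2) ≠ 1 := by decide
  simp only [hA, hB, Set.mem_union, Finset.coe_filter, Set.mem_setOf_eq, Finset.mem_univ,
    true_and, Set.mem_univ, iff_true]
  tauto
end

section
/- Let p ≥ 0 and m ≥ 1 be integers and let G be a graph with m edges. Then there exist an orientation D of G and a bijection σ : A(D) → {p+1, ..., p+m} such that for every vertex v of G, ⌊(d_G(v)−1)/2⌋ − (p+m) ≤ s(v) ≤ ⌊(d_G(v)−1)/2⌋ + (p+m), where s(v) is the sum of labels of arcs entering v minus the sum of labels of arcs leaving v. -/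
/-!
Induct on the edges, with the top label `t ≥ |E(G)|` as a parameter: the arcs receive the
labels `t - |E(G)| + 1, …, t`, and every non-isolated vertex has deviation
`|s(v) - ⌊(d(v) - 1)/2⌋| ≤ t`. A graph with an edge has a vertex `u` of degree one or a cycle
(in a forest, a longest path starts at a leaf). A pendant edge `uw` receives the label `t`, the
rest of the graph being labelled with top label `t - 1`, and it points away from `w` exactly
when the deviation at `w` is positive, which keeps that deviation within `t`. A cycle with `k`
edges receives the labels `t - k + 1, …, t` in any order and is oriented cyclically, the rest
being labelled with top label `t - k`: each vertex of the cycle gains one entering and one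
leaving arc, so its oriented sum moves by at most `k - 1` while `⌊(d(v) - 1)/2⌋` grows by
exactly one.
-/

variable {V : Type*} [Fintype V] [DecidableEq V]

/-- `A` is an orientation of the simple graph `G`: the arcs of `A` are exactly the edges of
`G`, each edge receiving exactly one of its two possible directions. -/
def IsOrientation (G : SimpleGraph V) (A : Finset (V × V)) : Prop :=
  (∀ a ∈ A, G.Adj a.1 a.2) ∧
  (∀ u v : V, G.Adj u v → ((u, v) ∈ A ∨ (v, u) ∈ A)) ∧
  (∀ u v : V, (u, v) ∈ A → (v, u) ∉ A)

/-- The oriented vertex sum at `v`: the sum of labels of arcs entering `v` minus the sum of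
labels of arcs leaving `v`. -/
def orientedSum (A : Finset (V × V)) (σ : V × V → ℤ) (v : V) : ℤ :=
  (∑ a ∈ A.filter (fun a => a.2 = v), σ a) - (∑ a ∈ A.filter (fun a => a.1 = v), σ a)

set_option linter.unusedSectionVars false

open Finset SimpleGraph

def inDegree (A : Finset (V × V)) (v : V) : ℕ := #(A.filter fun a => a.2 = v)

def outDegree (A : Finset (V × V)) (v : V) : ℕ := #(A.filter fun a => a.1 = v)

section OrientedSum

variable {A B : Finset (V × V)} {σ τ : V × V → ℤ} {v : V}

lemma inDegree_union (h : Disjoint A B) : inDegree (A ∪ B) v = inDegree A v + inDegree B v := by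
  rw [inDegree, filter_union, card_union_of_disjoint (disjoint_filter_filter h)]; rfl

lemma outDegree_union (h : Disjoint A B) :
    outDegree (A ∪ B) v = outDegree A v + outDegree B v := by
  rw [outDegree, filter_union, card_union_of_disjoint (disjoint_filter_filter h)]; rfl

lemma inDegree_singleton (b : V × V) : inDegree {b} v = if b.2 = v then 1 else 0 := by
  rw [inDegree, filter_singleton]; split_ifs <;> rfl

lemma outDegree_singleton (b : V × V) : outDegree {b} v = if b.1 = v then 1 else 0 := by
  rw [outDegree, filter_singleton]; split_ifs <;> rfl

lemma orientedSum_congr (h : ∀ a ∈ A, σ a = τ a) (v : V) :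
    orientedSum A σ v = orientedSum A τ v := by
  unfold orientedSum
  rw [sum_congr rfl fun a ha => h a (mem_filter.1 ha).1,
    sum_congr rfl fun a ha => h a (mem_filter.1 ha).1]

lemma orientedSum_union (h : Disjoint A B) (σ : V × V → ℤ) (v : V) :
    orientedSum (A ∪ B) σ v = orientedSum A σ v + orientedSum B σ v := by
  unfold orientedSum
  rw [filter_union, filter_union, sum_union (disjoint_filter_filter h),
    sum_union (disjoint_filter_filter h)]
  ring

lemma orientedSum_union_piecewise (h : Disjoint A B) (σ τ : V × V → ℤ) (v : V) :
    orientedSum (A ∪ B) (B.piecewise τ σ) v = orientedSum A σ v + orientedSum B τ v := by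
  rw [orientedSum_union h,
    orientedSum_congr (A := A) (τ := σ) fun a ha => piecewise_eq_of_notMem _ _ _
      (disjoint_left.1 h ha),
    orientedSum_congr (A := B) (τ := τ) fun a ha => piecewise_eq_of_mem _ _ _ ha]

lemma orientedSum_singleton (b : V × V) :
    orientedSum {b} σ v = (if b.2 = v then σ b else 0) - (if b.1 = v then σ b else 0) := by
  unfold orientedSum
  rw [filter_singleton, filter_singleton]
  split_ifs <;> simp

lemma orientedSum_eq_zero (hin : inDegree A v = 0) (hout : outDegree A v = 0) :
    orientedSum A σ v = 0 := by
  rw [inDegree, card_eq_zero] at hin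
  rw [outDegree, card_eq_zero] at hout
  simp [orientedSum, hin, hout]

lemma abs_orientedSum_le {lo hi : ℤ} (hσ : ∀ a ∈ A, σ a ∈ Icc lo hi) (hin : inDegree A v = 1)
    (hout : outDegree A v = 1) : |orientedSum A σ v| ≤ hi - lo := by
  obtain ⟨a, ha⟩ := card_eq_one.1 hin
  obtain ⟨b, hb⟩ := card_eq_one.1 hout
  have hamem : a ∈ A := (mem_filter.1 (ha ▸ mem_singleton_self a)).1
  have hbmem : b ∈ A := (mem_filter.1 (hb ▸ mem_singleton_self b)).1
  rw [orientedSum, ha, hb, sum_singleton, sum_singleton, abs_le]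
  have := mem_Icc.1 (hσ a hamem)
  have := mem_Icc.1 (hσ b hbmem)
  constructor <;> linarith

end OrientedSum

section Labelling

variable {α : Type*} [DecidableEq α]

lemma exists_image_eq_Ioc (B : Finset α) (t : ℤ) : ∃ τ : α → ℤ, B.image τ = Ioc (t - #B) t := by
  induction B using Finset.induction_on generalizing t with
  | empty => exact ⟨fun _ => 0, by simp⟩
  | insert a B ha ih =>
    obtain ⟨τ, hτ⟩ := ih (t - 1)
    refine ⟨Function.update τ a t, ?_⟩
    rw [image_insert, Function.update_self, image_congr fun b hb =>
      Function.update_of_ne (ne_of_mem_of_not_mem hb ha) _ _, hτ, card_insert_of_notMem ha]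
    ext z
    simp only [mem_insert, mem_Ioc]
    omega

lemma image_piecewise_union {A B : Finset α} {σ τ : α → ℤ} {t : ℤ} (h : Disjoint A B)
    (hA : A.image σ = Ioc (t - #B - #A) (t - #B)) (hB : B.image τ = Ioc (t - #B) t) :
    (A ∪ B).image (B.piecewise τ σ) = Ioc (t - #(A ∪ B)) t := by
  have hσ : A.image (B.piecewise τ σ) = A.image σ :=
    image_congr fun a ha => piecewise_eq_of_notMem _ _ _ (disjoint_left.1 h ha)
  have hτ : B.image (B.piecewise τ σ) = B.image τ :=
    image_congr fun a ha => piecewise_eq_of_mem _ _ _ ha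
  rw [image_union, hσ, hτ, hA, hB,
    Ioc_union_Ioc_eq_Ioc (by omega) (by omega), card_union_of_disjoint h]
  congr 1
  omega

end Labelling

namespace IsOrientation

variable {G H : SimpleGraph V} {A B : Finset (V × V)}

lemma disjoint (hA : IsOrientation G A) (hB : IsOrientation H B) (hGH : Disjoint G H) :
    Disjoint A B :=
  disjoint_left.2 fun a haA haB => hGH.le_bot ⟨hA.1 a haA, hB.1 a haB⟩

lemma sup (hA : IsOrientation G A) (hB : IsOrientation H B) (hGH : Disjoint G H) :
    IsOrientation (G ⊔ H) (A ∪ B) := by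
  refine ⟨fun a ha => ?_, fun u v huv => ?_, fun u v huv hvu => ?_⟩
  · rcases mem_union.1 ha with ha | ha
    exacts [Or.inl (hA.1 a ha), Or.inr (hB.1 a ha)]
  · rcases huv with huv | huv
    · rcases hA.2.1 u v huv with h | h <;> simp [h]
    · rcases hB.2.1 u v huv with h | h <;> simp [h]
  · rcases mem_union.1 huv with huv | huv <;> rcases mem_union.1 hvu with hvu | hvu
    · exact hA.2.2 u v huv hvu
    · exact hGH.le_bot ⟨hA.1 _ huv, (hB.1 _ hvu).symm⟩
    · exact hGH.le_bot ⟨hA.1 _ hvu, (hB.1 _ huv).symm⟩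
    · exact hB.2.2 u v huv hvu

lemma union_of_sdiff (hHG : H ≤ G) (hA : IsOrientation (G \ H) A) (hB : IsOrientation H B) :
    IsOrientation G (A ∪ B) ∧ Disjoint A B := by
  refine ⟨?_, hA.disjoint hB disjoint_sdiff_self_left⟩
  simpa only [sdiff_sup_cancel hHG] using hA.sup hB disjoint_sdiff_self_left

lemma ncard_edgeSet (hA : IsOrientation G A) : G.edgeSet.ncard = #A := by
  have hE : G.edgeSet = ↑(A.image fun a => s(a.1, a.2)) := by
    ext e
    induction e using Sym2.ind with
    | _ x y =>
      simp only [mem_edgeSet, coe_image, Set.mem_image, mem_coe]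
      constructor
      · intro h
        rcases hA.2.1 x y h with h | h
        exacts [⟨_, h, rfl⟩, ⟨_, h, Sym2.eq_swap⟩]
      · rintro ⟨a, ha, hae⟩
        rw [← mem_edgeSet, ← hae]
        exact hA.1 a ha
  rw [hE, Set.ncard_coe_finset, card_image_of_injOn]
  intro a ha b hb hab
  rcases Sym2.eq_iff.1 hab with ⟨h1, h2⟩ | ⟨h1, h2⟩
  · exact Prod.ext h1 h2
  · exact absurd (show (b.2, b.1) ∈ A by rw [← h1, ← h2]; exact ha) (hA.2.2 _ _ hb)

lemma degree_eq (hA : IsOrientation G A) (v : V) [Fintype (G.neighborSet v)] :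
    G.degree v = inDegree A v + outDegree A v := by
  have hnbr : G.neighborFinset v = (A.filter fun a => a.2 = v).image Prod.fst ∪
      (A.filter fun a => a.1 = v).image Prod.snd := by
    ext x
    simp only [mem_neighborFinset, mem_union, mem_image, mem_filter]
    constructor
    · intro h
      rcases hA.2.1 v x h with h | h
      exacts [Or.inr ⟨_, ⟨h, rfl⟩, rfl⟩, Or.inl ⟨_, ⟨h, rfl⟩, rfl⟩]
    · rintro (⟨a, ⟨ha, rfl⟩, rfl⟩ | ⟨a, ⟨ha, rfl⟩, rfl⟩)
      exacts [(hA.1 a ha).symm, hA.1 a ha]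
  rw [← card_neighborFinset_eq_degree, hnbr, card_union_of_disjoint, card_image_of_injOn,
    card_image_of_injOn]
  · rfl
  · intro a ha b hb hab
    exact Prod.ext ((mem_filter.1 ha).2.trans (mem_filter.1 hb).2.symm) hab
  · intro a ha b hb hab
    exact Prod.ext hab ((mem_filter.1 ha).2.trans (mem_filter.1 hb).2.symm)
  · refine disjoint_left.2 fun x hx hx' => ?_
    obtain ⟨a, ha, rfl⟩ := mem_image.1 hx
    obtain ⟨b, hb, hba⟩ := mem_image.1 hx'
    rw [mem_filter] at ha hb
    refine hA.2.2 a.1 a.2 ha.1 ?_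
    rw [ha.2, ← hb.2, ← hba]
    exact hb.1

end IsOrientation

lemma isOrientation_fromRel {B : Finset (V × V)} (hB : ∀ u v, (u, v) ∈ B → (v, u) ∉ B) :
    IsOrientation (fromRel fun u v => (u, v) ∈ B) B := by
  refine ⟨fun ⟨x, y⟩ ha => fromRel_adj _ _ _ |>.2 ⟨fun h => hB _ _ ha ?_, Or.inl ha⟩,
    fun u v h => (fromRel_adj _ _ _ |>.1 h).2, hB⟩
  rwa [show x = y from h] at ha ⊢

lemma isOrientation_edge {u w : V} (h : u ≠ w) : IsOrientation (edge u w) {(u, w)} := by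
  refine ⟨fun a ha => ?_, fun x y hxy => ?_, fun x y hxy hyx => ?_⟩
  · rw [mem_singleton.1 ha, edge_adj]
    exact ⟨Or.inl ⟨rfl, rfl⟩, h⟩
  · rw [edge_adj] at hxy
    rcases hxy with ⟨⟨rfl, rfl⟩ | ⟨rfl, rfl⟩, -⟩ <;> simp
  · simp only [mem_singleton, Prod.mk.injEq] at hxy hyx
    exact h (hxy.1.symm.trans hyx.2)

section InOut

variable {B : Finset (V × V)} {v : V}

lemma inDegree_le_one (h : Set.InjOn Prod.snd (B : Set (V × V))) : inDegree B v ≤ 1 :=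
  card_le_one.2 fun a ha b hb => by
    rw [mem_filter] at ha hb
    exact h ha.1 hb.1 (ha.2.trans hb.2.symm)

lemma outDegree_le_one (h : Set.InjOn Prod.fst (B : Set (V × V))) : outDegree B v ≤ 1 :=
  card_le_one.2 fun a ha b hb => by
    rw [mem_filter] at ha hb
    exact h ha.1 hb.1 (ha.2.trans hb.2.symm)

lemma inDegree_pos_iff : 0 < inDegree B v ↔ v ∈ B.image Prod.snd := by
  simp [inDegree, card_pos, filter_nonempty_iff]

lemma outDegree_pos_iff : 0 < outDegree B v ↔ v ∈ B.image Prod.fst := by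
  simp [outDegree, card_pos, filter_nonempty_iff]

lemma inDegree_eq_outDegree_le_one_of_injOn (hfst : Set.InjOn Prod.fst (B : Set (V × V)))
    (hsnd : Set.InjOn Prod.snd (B : Set (V × V))) (himage : B.image Prod.fst = B.image Prod.snd)
    (v : V) : inDegree B v = outDegree B v ∧ inDegree B v ≤ 1 := by
  have hpos : 0 < inDegree B v ↔ 0 < outDegree B v := by
    rw [inDegree_pos_iff, outDegree_pos_iff, himage]
  have := inDegree_le_one (v := v) hsnd
  have := outDegree_le_one (v := v) hfst
  omega

end InOut

namespace SimpleGraph.Walk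

variable {G : SimpleGraph V} {u v : V}

def arcs (c : G.Walk u v) : Finset (V × V) := (c.darts.map Dart.toProd).toFinset

lemma mem_arcs {c : G.Walk u v} {a : V × V} : a ∈ c.arcs ↔ ∃ d ∈ c.darts, d.toProd = a := by
  simp [arcs]

lemma adj_of_mem_arcs {c : G.Walk u v} {a : V × V} (ha : a ∈ c.arcs) : G.Adj a.1 a.2 := by
  obtain ⟨d, -, rfl⟩ := mem_arcs.1 ha
  exact d.adj

lemma IsTrail.swap_notMem_arcs {c : G.Walk u v} (hc : c.IsTrail) {x y : V}
    (h : (x, y) ∈ c.arcs) : (y, x) ∉ c.arcs := by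
  intro h'
  obtain ⟨d, hd, hdxy⟩ := mem_arcs.1 h
  obtain ⟨d', hd', hdyx⟩ := mem_arcs.1 h'
  have hdd' : d = d' := List.inj_on_of_nodup_map hc.edges_nodup hd hd' <| by
    rw [Dart.edge, Dart.edge, hdxy, hdyx, Sym2.eq_swap]
  rw [hdd', hdyx, Prod.mk.injEq] at hdxy
  exact (adj_of_mem_arcs h).ne hdxy.1.symm

lemma injOn_fst_arcs {c : G.Walk u v} (h : (c.darts.map (·.fst)).Nodup) :
    Set.InjOn Prod.fst (c.arcs : Set (V × V)) := by
  rintro _ ha _ hb hab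
  obtain ⟨d, hd, rfl⟩ := mem_arcs.1 ha
  obtain ⟨d', hd', rfl⟩ := mem_arcs.1 hb
  rw [List.inj_on_of_nodup_map h hd hd' hab]

lemma injOn_snd_arcs {c : G.Walk u v} (h : (c.darts.map (·.snd)).Nodup) :
    Set.InjOn Prod.snd (c.arcs : Set (V × V)) := by
  rintro _ ha _ hb hab
  obtain ⟨d, hd, rfl⟩ := mem_arcs.1 ha
  obtain ⟨d', hd', rfl⟩ := mem_arcs.1 hb
  rw [List.inj_on_of_nodup_map h hd hd' hab]

lemma image_fst_arcs (c : G.Walk u v) :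
    c.arcs.image Prod.fst = (c.darts.map (·.fst)).toFinset := by
  ext; simp [arcs]

lemma image_snd_arcs (c : G.Walk u v) :
    c.arcs.image Prod.snd = (c.darts.map (·.snd)).toFinset := by
  ext; simp [arcs]

lemma IsCycle.inDegree_arcs_eq_outDegree_le_one {c : G.Walk u u} (hc : c.IsCycle) (v : V) :
    inDegree c.arcs v = outDegree c.arcs v ∧ inDegree c.arcs v ≤ 1 := by
  refine inDegree_eq_outDegree_le_one_of_injOn (injOn_fst_arcs ?_) (injOn_snd_arcs ?_) ?_ v
  · rw [map_fst_darts]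
    exact hc.nodup_dropLast_support
  · rw [map_snd_darts]
    exact hc.support_nodup
  · rw [image_fst_arcs, image_snd_arcs, map_fst_darts, map_snd_darts]
    exact List.toFinset_eq_of_perm _ _ c.tail_support_perm_dropLast_support.symm

lemma arcs_nonempty {c : G.Walk u v} (hc : ¬c.Nil) : c.arcs.Nonempty := by
  obtain ⟨d, hd⟩ := List.exists_mem_of_ne_nil c.darts (by simpa [darts_eq_nil] using hc)
  exact ⟨d.toProd, mem_arcs.2 ⟨d, hd, rfl⟩⟩

end SimpleGraph.Walk

def deviation (A : Finset (V × V)) (σ : V × V → ℤ) (v : V) : ℤ :=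
  orientedSum A σ v - (((inDegree A v + outDegree A v : ℕ) : ℤ) - 1) / 2

/-- Isolated vertices are excluded: their deviation is `0 - (-1) / 2 = 1`, which may exceed `t`. -/
def IsBalancedLabelling (A : Finset (V × V)) (σ : V × V → ℤ) (t : ℤ) : Prop :=
  A.image σ = Ioc (t - #A) t ∧ ∀ v, 0 < inDegree A v + outDegree A v → |deviation A σ v| ≤ t

namespace IsBalancedLabelling

variable {A B : Finset (V × V)} {σ τ : V × V → ℤ} {t : ℤ}

lemma eq_zero_or_abs_le (hA : IsBalancedLabelling A σ t) (v : V) :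
    inDegree A v = 0 ∧ outDegree A v = 0 ∧ orientedSum A σ v = 0 ∨
      0 < inDegree A v + outDegree A v ∧ |deviation A σ v| ≤ t := by
  rcases Nat.eq_zero_or_pos (inDegree A v + outDegree A v) with h | h
  · exact Or.inl ⟨by omega, by omega, orientedSum_eq_zero (by omega) (by omega)⟩
  · exact Or.inr ⟨h, hA.2 v h⟩

lemma exists_union_leaf {u w : V} (hA : IsBalancedLabelling A σ (t - 1)) (hin : inDegree A u = 0)
    (hout : outDegree A u = 0) (huw : u ≠ w) (ht : 0 ≤ t) :
    ∃ b, (b = (u, w) ∨ b = (w, u)) ∧ ∃ τ, IsBalancedLabelling (A ∪ {b}) τ t := by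
  suffices key : ∀ b, (b = (u, w) ∧ deviation A σ w ≤ 0) ∨ (b = (w, u) ∧ 0 < deviation A σ w) →
      IsBalancedLabelling (A ∪ {b}) (({b} : Finset (V × V)).piecewise (fun _ => t) σ) t by
    by_cases hpos : 0 < deviation A σ w
    · exact ⟨_, Or.inr rfl, _, key _ (Or.inr ⟨rfl, hpos⟩)⟩
    · exact ⟨_, Or.inl rfl, _, key _ (Or.inl ⟨rfl, not_lt.1 hpos⟩)⟩
  intro b hb
  have hbA : b ∉ A := fun hbA => by
    rcases hb with ⟨rfl, -⟩ | ⟨rfl, -⟩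
    · exact absurd (outDegree_pos_iff.2 (mem_image_of_mem Prod.fst hbA)) (by dsimp only; omega)
    · exact absurd (inDegree_pos_iff.2 (mem_image_of_mem Prod.snd hbA)) (by dsimp only; omega)
  have hdisj : Disjoint A {b} := disjoint_singleton_right.2 hbA
  refine ⟨image_piecewise_union hdisj (by simpa using hA.1) ?_, fun v hv => ?_⟩
  · ext z
    simp only [image_singleton, mem_singleton, mem_Ioc, card_singleton]
    omega
  have hu := hA.eq_zero_or_abs_le u
  have hw := hA.eq_zero_or_abs_le w
  have hv' := hA.eq_zero_or_abs_le v
  rw [inDegree_union hdisj, outDegree_union hdisj, inDegree_singleton, outDegree_singleton] at hv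
  rw [deviation, orientedSum_union_piecewise hdisj, inDegree_union hdisj, outDegree_union hdisj,
    orientedSum_singleton, inDegree_singleton, outDegree_singleton]
  rw [abs_le] at hu hw hv' ⊢
  unfold deviation at hu hw hv' hb
  rcases hb with ⟨rfl, hD⟩ | ⟨rfl, hD⟩ <;> dsimp only at hv ⊢ <;> split_ifs at hv ⊢ <;>
    subst_vars <;> first | exact absurd rfl huw | (push_cast at hu hw hv' hD ⊢; omega)

lemma union_cycles (hA : IsBalancedLabelling A σ (t - #B)) (hτ : B.image τ = Ioc (t - #B) t)
    (hAB : Disjoint A B) (hB : ∀ v, inDegree B v = outDegree B v ∧ inDegree B v ≤ 1)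
    (ht : #B ≤ t) : IsBalancedLabelling (A ∪ B) (B.piecewise τ σ) t := by
  refine ⟨image_piecewise_union hAB hA.1 hτ, fun v hv => ?_⟩
  have hlabels : ∀ a ∈ B, τ a ∈ Icc (t - #B + 1) t := fun a ha => by
    have := hτ ▸ mem_image_of_mem τ ha
    rw [mem_Ioc] at this
    rw [mem_Icc]
    omega
  have hv' := hA.eq_zero_or_abs_le v
  obtain ⟨hio, hle⟩ := hB v
  rw [inDegree_union hAB, outDegree_union hAB] at hv
  rw [deviation, orientedSum_union_piecewise hAB, inDegree_union hAB, outDegree_union hAB]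
  rw [abs_le] at hv' ⊢
  unfold deviation at hv'
  rcases Nat.eq_zero_or_pos (inDegree B v) with h0 | h1
  · rw [orientedSum_eq_zero h0 (by omega)]
    push_cast at hv' ⊢
    omega
  · have hc := abs_orientedSum_le hlabels (by omega : inDegree B v = 1) (by omega)
    rw [abs_le] at hc
    push_cast at hv' ⊢
    omega

end IsBalancedLabelling

lemma SimpleGraph.exists_leaf_or_isCycle {G : SimpleGraph V} {x y : V} (hxy : G.Adj x y) :
    (∃ u w, G.Adj u w ∧ ∀ z, G.Adj u z → z = w) ∨ ∃ (u : V) (c : G.Walk u u), c.IsCycle := by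
  by_cases hG : G.IsAcyclic
  swap
  · right
    simpa [IsAcyclic] using hG
  left
  have : Nonempty V := ⟨x⟩
  obtain ⟨u, v, p, hp, hmax⟩ := Walk.exists_isPath_forall_isPath_length_le_length G
  have hnil : ¬p.Nil := by
    have := hmax x y hxy.toWalk (by simp [hxy.ne])
    rw [← Walk.length_eq_zero_iff]
    simp at this
    omega
  refine ⟨u, p.snd, p.adj_snd hnil, fun z hz => hG.eq_snd_of_adj_start hp hz ?_⟩
  by_contra hzp
  have := hmax z v (p.cons hz.symm) (hp.cons hzp)
  simp at this

lemma fromRel_le_of_forall_adj {G : SimpleGraph V} {B : Finset (V × V)}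
    (hBG : ∀ a ∈ B, G.Adj a.1 a.2) : (fromRel fun x y => (x, y) ∈ B) ≤ G := fun x y hxy => by
  obtain ⟨-, h | h⟩ := (fromRel_adj _ _ _).1 hxy
  exacts [hBG _ h, (hBG _ h).symm]

def HasBalancedOrientation (G : SimpleGraph V) (t : ℤ) : Prop :=
  ∃ A, IsOrientation G A ∧ ∃ σ, IsBalancedLabelling A σ t

namespace HasBalancedOrientation

variable {G : SimpleGraph V} {t : ℤ}

lemma bot (t : ℤ) : HasBalancedOrientation (⊥ : SimpleGraph V) t :=
  ⟨∅, ⟨by simp, by simp, by simp⟩, fun _ => 0, by simp, by simp [inDegree, outDegree]⟩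

lemma of_sdiff_edge {u w : V} (huw : G.Adj u w) (hleaf : ∀ x, G.Adj u x → x = w) (ht : 0 ≤ t)
    (h : HasBalancedOrientation (G \ edge u w) (t - 1)) : HasBalancedOrientation G t := by
  obtain ⟨A, hA, σ, hσ⟩ := h
  have hu : ∀ a ∈ A, a.1 ≠ u ∧ a.2 ≠ u := by
    intro a ha
    obtain ⟨hG, hedge⟩ := (sdiff_adj _ _ _ _).1 (hA.1 a ha)
    rw [edge_adj] at hedge
    refine ⟨fun h1 => hedge ⟨Or.inl ⟨h1, hleaf _ (h1 ▸ hG)⟩, hG.ne⟩,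
      fun h2 => hedge ⟨Or.inr ⟨hleaf _ (h2 ▸ hG.symm), h2⟩, hG.ne⟩⟩
  have hin : inDegree A u = 0 := card_eq_zero.2 (filter_eq_empty_iff.2 fun a ha => (hu a ha).2)
  have hout : outDegree A u = 0 := card_eq_zero.2 (filter_eq_empty_iff.2 fun a ha => (hu a ha).1)
  obtain ⟨b, hb, τ, hτ⟩ := hσ.exists_union_leaf hin hout huw.ne ht
  have hbH : IsOrientation (edge u w) {b} := by
    rcases hb with rfl | rfl
    · exact isOrientation_edge huw.ne
    · rw [edge_comm]
      exact isOrientation_edge huw.ne.symm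
  exact ⟨_, (hA.union_of_sdiff ((edge_le_iff G).2 (Or.inr huw)) hbH).1, τ, hτ⟩

lemma of_sdiff_cycles {B : Finset (V × V)} (hBG : ∀ a ∈ B, G.Adj a.1 a.2)
    (hanti : ∀ x y, (x, y) ∈ B → (y, x) ∉ B)
    (hB : ∀ v, inDegree B v = outDegree B v ∧ inDegree B v ≤ 1) (ht : #B ≤ t)
    (h : HasBalancedOrientation (G \ fromRel fun x y => (x, y) ∈ B) (t - #B)) :
    HasBalancedOrientation G t := by
  obtain ⟨A, hA, σ, hσ⟩ := h
  obtain ⟨τ, hτ⟩ := exists_image_eq_Ioc B t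
  obtain ⟨hAB, hdisj⟩ := hA.union_of_sdiff (fromRel_le_of_forall_adj hBG)
    (isOrientation_fromRel hanti)
  exact ⟨_, hAB, _, hσ.union_cycles hτ hdisj hB ht⟩

end HasBalancedOrientation

theorem hasBalancedOrientation (G : SimpleGraph V) {t : ℤ} (ht : G.edgeSet.ncard ≤ t) :
    HasBalancedOrientation G t := by
  induction G using WellFoundedLT.induction generalizing t with
  | ind G ih =>
  obtain rfl | ⟨x, y, hxy⟩ : G = ⊥ ∨ ∃ x y, G.Adj x y := by
    by_contra! h
    exact h.1 (eq_bot_iff.2 fun x y hxy => h.2 x y hxy)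
  · exact .bot t
  have ih' : ∀ {H B}, H ≤ G → IsOrientation H B → B.Nonempty →
      (#B : ℤ) ≤ t ∧ HasBalancedOrientation (G \ H) (t - #B) := by
    intro H B hHG hB ⟨a, ha⟩
    have hsub := edgeSet_mono hHG
    have hcard := Set.ncard_sdiff_add_ncard_of_subset hsub
    rw [← edgeSet_sdiff, hB.ncard_edgeSet] at hcard
    refine ⟨by omega, ih _ (sdiff_lt hHG fun hH => ?_) (by omega)⟩
    simpa [hH] using hB.1 a ha
  rcases exists_leaf_or_isCycle hxy with ⟨u, w, huw, hleaf⟩ | ⟨u, c, hc⟩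
  · obtain ⟨ht', h⟩ := ih' ((edge_le_iff G).2 (Or.inr huw)) (isOrientation_edge huw.ne)
      (singleton_nonempty _)
    rw [card_singleton, Nat.cast_one] at ht' h
    exact .of_sdiff_edge huw hleaf (by omega) h
  · have hanti : ∀ x y, (x, y) ∈ c.arcs → (y, x) ∉ c.arcs := fun _ _ =>
      hc.isTrail.swap_notMem_arcs
    obtain ⟨ht', h⟩ := ih' (fromRel_le_of_forall_adj fun _ => c.adj_of_mem_arcs)
      (isOrientation_fromRel hanti) (Walk.arcs_nonempty hc.not_nil)
    exact .of_sdiff_cycles (fun _ => c.adj_of_mem_arcs) hanti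
      hc.inDegree_arcs_eq_outDegree_le_one ht' h

/-- Lemma 2.3: for `p ≥ 0`, `m ≥ 1` and a graph `G` with `m` edges, there are an orientation
`A` of `G` and a bijection `σ` from the arcs to `{p+1, …, p+m}` such that every oriented
vertex sum lies between `⌊(d_G(v)-1)/2⌋ - (p+m)` and `⌊(d_G(v)-1)/2⌋ + (p+m)`. -/
theorem consecutive_labels_orientation
    (G : SimpleGraph V) [DecidableRel G.Adj] (p m : ℕ) (hm : 1 ≤ m)
    (hcard : G.edgeFinset.card = m) :
    ∃ A : Finset (V × V), IsOrientation G A ∧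
      ∃ σ : V × V → ℤ, Set.InjOn σ A ∧
        A.image σ = Finset.Icc ((p : ℤ) + 1) ((p : ℤ) + m) ∧
        ∀ v : V,
          ((G.degree v : ℤ) - 1) / 2 - ((p : ℤ) + m) ≤ orientedSum A σ v ∧
          orientedSum A σ v ≤ ((G.degree v : ℤ) - 1) / 2 + ((p : ℤ) + m) := by
  have hE : G.edgeSet.ncard = m := by rw [← coe_edgeFinset, Set.ncard_coe_finset, hcard]
  obtain ⟨A, hA, σ, himage, hbound⟩ := hasBalancedOrientation G (t := p + m) (by omega)
  have hAm : #A = m := hA.ncard_edgeSet ▸ hE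
  have hIcc : Ioc ((p : ℤ) + m - m) (p + m) = Icc ((p : ℤ) + 1) (p + m) := by
    ext; simp only [mem_Ioc, mem_Icc]; omega
  rw [hAm, hIcc] at himage
  refine ⟨A, hA, σ, injOn_of_card_image_eq (by rw [himage, Int.card_Icc]; omega), himage,
    fun v => ?_⟩
  rw [hA.degree_eq v]
  rcases Nat.eq_zero_or_pos (inDegree A v + outDegree A v) with h0 | hpos
  · rw [orientedSum_eq_zero (by omega) (by omega), h0]
    omega
  · have := abs_le.1 (hbound v hpos)
    unfold deviation at this
    push_cast at this ⊢
    omega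
end
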